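/- arXiv:2205.13692 — 4 statements merged into one kernel-verified Lean document; each statement's English description precedes it below -/
import Mathlib

section
/- Let B ∈ ℝ^{d×k} with d ≥ k, and let B = Q R be its QR factorization with Q ∈ ℝ^{d×k} having orthonormal columns and R ∈ ℝ^{k×k} upper triangular. For α > 0, if ‖I_k − α BᵀB‖₂ ≤ δ < 1, then ‖Q Qᵀ − α B Bᵀ‖₂ ≤ δ. -/
/-!
Since `QᵀQ = 1`, the Gram matrix is `BᵀB = RᵀR`, and `QQᵀ - αBBᵀ = Q (1 - αRRᵀ) Qᵀ` with
`‖Q‖ ≤ 1`. The matrices `RRᵀ` and `RᵀR` are symmetric with the same spectrum, so the continuous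
functional calculus gives `‖1 - αRRᵀ‖ = ‖1 - αRᵀR‖ = ‖1 - αBᵀB‖ ≤ δ`.
-/

open Matrix BigOperators

noncomputable def specNorm {m n : ℕ} (A : Matrix (Fin m) (Fin n) ℝ) : ℝ :=
  sSup {r : ℝ | ∃ v : Fin n → ℝ, ∑ i, v i ^ 2 = 1 ∧ r = Real.sqrt (∑ i, (A.mulVec v) i ^ 2)}

noncomputable def sMin {m n : ℕ} (A : Matrix (Fin m) (Fin n) ℝ) : ℝ :=
  sInf {r : ℝ | ∃ v : Fin n → ℝ, ∑ i, v i ^ 2 = 1 ∧ r = Real.sqrt (∑ i, (A.mulVec v) i ^ 2)}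

section CFC

variable {A : Type*} [NormedRing A] [StarRing A] [NormedAlgebra ℝ A]
  [IsometricContinuousFunctionalCalculus ℝ A IsSelfAdjoint]

theorem norm_cfc_eq_of_spectrum_eq {a b : A} (ha : IsSelfAdjoint a) (hb : IsSelfAdjoint b)
    (h : spectrum ℝ a = spectrum ℝ b) {f : ℝ → ℝ} (hf : Continuous f) :
    ‖cfc f a‖ = ‖cfc f b‖ := by
  have key (c : ℝ) (hc : 0 ≤ c) : ‖cfc f a‖ ≤ c ↔ ‖cfc f b‖ ≤ c := by
    rw [norm_cfc_le_iff f a hc, norm_cfc_le_iff f b hc, h]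
  exact le_antisymm ((key _ (norm_nonneg _)).2 le_rfl) ((key _ (norm_nonneg _)).1 le_rfl)

theorem cfc_one_sub_const_mul_id (α : ℝ) {a : A} (ha : IsSelfAdjoint a) :
    cfc (fun x => 1 - α * x) a = 1 - α • a := by
  rw [cfc_sub (fun _ => 1) (fun x => α * x) a, cfc_const_one ℝ a, cfc_const_mul_id α a]

theorem norm_one_sub_smul_eq_of_spectrum_eq {a b : A} (ha : IsSelfAdjoint a)
    (hb : IsSelfAdjoint b) (h : spectrum ℝ a = spectrum ℝ b) (α : ℝ) :
    ‖1 - α • a‖ = ‖1 - α • b‖ := by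
  rw [← cfc_one_sub_const_mul_id α ha, ← cfc_one_sub_const_mul_id α hb]
  exact norm_cfc_eq_of_spectrum_eq ha hb h (by fun_prop)

end CFC

theorem Matrix.spectrum_mul_comm {K n : Type*} [Field K] [Fintype n] [DecidableEq n]
    (A B : Matrix n n K) : spectrum K (A * B) = spectrum K (B * A) := by
  ext r
  by_cases hr : r = 0
  · subst hr
    rw [spectrum.zero_mem_iff, spectrum.zero_mem_iff, isUnit_iff_isUnit_det,
      isUnit_iff_isUnit_det, det_mul, det_mul, mul_comm]
  · simpa [hr] using congr(r ∈ $(spectrum.nonzero_mul_comm A B))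

open scoped Matrix.Norms.L2Operator

theorem specNorm_eq_l2_opNorm {m n : ℕ} (A : Matrix (Fin m) (Fin n) ℝ) : specNorm A = ‖A‖ := by
  rw [l2_opNorm_def, ← ContinuousLinearMap.sSup_sphere_eq_norm, specNorm]
  congr 1
  ext r
  simp only [Set.mem_ofPred_eq, Set.mem_image, mem_sphere_iff_norm, sub_zero]
  constructor
  · rintro ⟨v, hv, rfl⟩
    exact ⟨WithLp.toLp 2 v, by simp [EuclideanSpace.norm_eq, hv], by simp [EuclideanSpace.norm_eq]⟩
  · rintro ⟨x, hx, rfl⟩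
    exact ⟨x.ofLp, by simpa [EuclideanSpace.norm_eq] using hx, by simp [EuclideanSpace.norm_eq]⟩

section L2OpNorm

variable {𝕜 m n : Type*} [RCLike 𝕜] [Fintype m] [Fintype n] [DecidableEq n]

theorem Matrix.l2_opNorm_one_le : ‖(1 : Matrix n n 𝕜)‖ ≤ 1 := by
  rw [cstar_norm_def, map_one]
  exact ContinuousLinearMap.norm_id_le

theorem Matrix.l2_opNorm_le_one_of_conjTranspose_mul_self_eq_one {Q : Matrix m n 𝕜}
    (hQ : Qᴴ * Q = 1) : ‖Q‖ ≤ 1 := by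
  have h : ‖Q‖ * ‖Q‖ ≤ 1 := by
    rw [← l2_opNorm_conjTranspose_mul_self, hQ]
    exact l2_opNorm_one_le
  nlinarith [norm_nonneg Q]

theorem Matrix.l2_opNorm_mul_mul_conjTranspose_le [DecidableEq m] {Q : Matrix m n 𝕜}
    (hQ : Qᴴ * Q = 1) (S : Matrix n n 𝕜) : ‖Q * S * Qᴴ‖ ≤ ‖S‖ := by
  have hQ1 := l2_opNorm_le_one_of_conjTranspose_mul_self_eq_one hQ
  calc ‖Q * S * Qᴴ‖ ≤ ‖Q‖ * ‖S‖ * ‖Qᴴ‖ := by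
        grw [l2_opNorm_mul, l2_opNorm_mul]
    _ ≤ 1 * ‖S‖ * 1 := by
        rw [l2_opNorm_conjTranspose]
        gcongr
    _ = ‖S‖ := by ring

end L2OpNorm

theorem Matrix.l2_opNorm_one_sub_smul_mul_transpose {n : Type*} [Fintype n] [DecidableEq n]
    (α : ℝ) (R : Matrix n n ℝ) : ‖1 - α • (R * Rᵀ)‖ = ‖1 - α • (Rᵀ * R)‖ := by
  have hRRt : IsSelfAdjoint (R * Rᵀ) := by
    simpa [star_eq_conjTranspose] using IsSelfAdjoint.mul_star_self R
  have hRtR : IsSelfAdjoint (Rᵀ * R) := by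
    simpa [star_eq_conjTranspose] using IsSelfAdjoint.star_mul_self R
  exact norm_one_sub_smul_eq_of_spectrum_eq hRRt hRtR (spectrum_mul_comm R Rᵀ) α

theorem stmt1_general {d k : ℕ} (α δ : ℝ)
    (B Q : Matrix (Fin d) (Fin k) ℝ) (R : Matrix (Fin k) (Fin k) ℝ)
    (hQR : B = Q * R) (hQ : Qᵀ * Q = 1)
    (hB : specNorm ((1 : Matrix (Fin k) (Fin k) ℝ) - α • (Bᵀ * B)) ≤ δ) :
    specNorm (Q * Qᵀ - α • (B * Bᵀ)) ≤ δ := by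
  have hGram : Bᵀ * B = Rᵀ * R := by
    rw [hQR, transpose_mul, Matrix.mul_assoc, ← Matrix.mul_assoc Qᵀ, hQ, Matrix.one_mul]
  have hconj : Q * Qᵀ - α • (B * Bᵀ) = Q * (1 - α • (R * Rᵀ)) * Qᴴ := by
    rw [conjTranspose_eq_transpose_of_trivial, hQR, transpose_mul, Matrix.mul_sub,
      Matrix.sub_mul, Matrix.mul_one, Matrix.mul_smul, Matrix.smul_mul]
    simp only [Matrix.mul_assoc]
  have hQ' : Qᴴ * Q = 1 := by rwa [conjTranspose_eq_transpose_of_trivial]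
  rw [specNorm_eq_l2_opNorm] at hB ⊢
  calc ‖Q * Qᵀ - α • (B * Bᵀ)‖ ≤ ‖1 - α • (R * Rᵀ)‖ := by
        rw [hconj]; exact l2_opNorm_mul_mul_conjTranspose_le hQ' _
    _ = ‖1 - α • (Rᵀ * R)‖ := l2_opNorm_one_sub_smul_mul_transpose α R
    _ ≤ δ := by rwa [← hGram]

theorem stmt1 {d k : ℕ} (hk : k ≤ d) (α δ : ℝ) (hα : 0 < α) (hδ : δ < 1)
    (B Q : Matrix (Fin d) (Fin k) ℝ) (R : Matrix (Fin k) (Fin k) ℝ)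
    (hQR : B = Q * R) (hQ : Qᵀ * Q = 1) (hR : R.BlockTriangular id)
    (hB : specNorm ((1 : Matrix (Fin k) (Fin k) ℝ) - α • (Bᵀ * B)) ≤ δ) :
    specNorm (Q * Qᵀ - α • (B * Bᵀ)) ≤ δ :=
  stmt1_general α δ B Q R hQR hQ hB
end

section
/- Let w₁,…,w_τ ∈ ℝ^k with ‖w_s‖₂ ≤ L for all s, and suppose α L² < 1. Then ‖∏_{s=1}^{τ}(I_k − α w_s w_sᵀ)‖₂ ≤ 1, and moreover ‖∏_{s=1}^{τ}(I_k − α w_s w_sᵀ) − (I_k − α ∑_{s=1}^{τ} w_s w_sᵀ)‖₂ ≤ ∑_{z=2}^{τ} (α τ L²)^z. -/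
open Matrix BigOperators

/-!
As an operator on Euclidean space, `1 - α • vecMulVec w w` is `x ↦ x - α⟪w, x⟫ w`, which does not
increase norms as long as `α‖w‖² ≤ 2`, while `‖α • vecMulVec w w‖ = α‖w‖² ≤ αL²`. In any normed
ring, writing `P, S` for the product and sum over the tail of the list,
`(1 - B) P - (1 - (B + S)) = (1 - B)(P - (1 - S)) + B S`, so each new factor adds at most
`a · a n` to the error of the first-order expansion; summing gives `a² C(τ, 2) ≤ (τ a)²`.
Finally `specNorm` is bounded by the L² operator norm.
-/

open scoped Matrix.Norms.L2Operator

section NormedRing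

variable {R ι : Type*} [SeminormedRing R]

theorem List.norm_prod_le_one {l : List R} (h1 : ‖(1 : R)‖ ≤ 1)
    (hl : ∀ x ∈ l, ‖x‖ ≤ 1) : ‖l.prod‖ ≤ 1 := by
  induction l with
  | nil => simpa using h1
  | cons x t ih =>
    rw [List.prod_cons]
    refine (norm_mul_le _ _).trans ?_
    simp only [List.forall_mem_cons] at hl
    exact mul_le_one₀ hl.1 (norm_nonneg _) (ih hl.2)

theorem List.norm_sum_map_le_mul_length (l : List ι) (B : ι → R) {a : ℝ}
    (hB : ∀ i ∈ l, ‖B i‖ ≤ a) : ‖(l.map B).sum‖ ≤ a * l.length := by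
  induction l with
  | nil => simp
  | cons i t ih =>
    simp only [List.forall_mem_cons] at hB
    rw [List.map_cons, List.sum_cons, List.length_cons, Nat.cast_succ, mul_add_one]
    exact (norm_add_le _ _).trans (by linarith [hB.1, ih hB.2])

theorem List.norm_prod_one_sub_sub_one_sub_sum_le (l : List ι) (B : ι → R) {a : ℝ}
    (h1 : ∀ i ∈ l, ‖1 - B i‖ ≤ 1) (hB : ∀ i ∈ l, ‖B i‖ ≤ a) :
    ‖(l.map fun i => 1 - B i).prod - (1 - (l.map B).sum)‖ ≤ a ^ 2 * l.length.choose 2 := by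
  induction l with
  | nil => simp
  | cons i t ih =>
    simp only [List.forall_mem_cons] at h1 hB
    have ha : 0 ≤ a := (norm_nonneg _).trans hB.1
    set P := (t.map fun i => 1 - B i).prod
    set S := (t.map B).sum
    have hS := List.norm_sum_map_le_mul_length t B hB.2
    have key : (1 - B i) * P - (1 - (B i + S)) = (1 - B i) * (P - (1 - S)) + B i * S := by
      noncomm_ring
    rw [List.map_cons, List.map_cons, List.prod_cons, List.sum_cons, key, List.length_cons,
      Nat.choose_succ_succ', Nat.choose_one_right, Nat.cast_add]
    calc ‖(1 - B i) * (P - (1 - S)) + B i * S‖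
        ≤ ‖1 - B i‖ * ‖P - (1 - S)‖ + ‖B i‖ * ‖S‖ :=
          (norm_add_le _ _).trans (add_le_add (norm_mul_le _ _) (norm_mul_le _ _))
      _ ≤ 1 * (a ^ 2 * t.length.choose 2) + a * (a * t.length) := by
          gcongr
          · exact h1.1
          · exact ih h1.2 hB.2
          · exact hB.1
      _ = a ^ 2 * (t.length + t.length.choose 2) := by ring

end NormedRing

theorem norm_one_sub_smul_rankOne_self_le_one {E : Type*} [NormedAddCommGroup E]
    [InnerProductSpace ℝ E] (u : E) {α : ℝ} (hα : 0 ≤ α) (h : α * ‖u‖ ^ 2 ≤ 2) :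
    ‖1 - α • InnerProductSpace.rankOne ℝ u u‖ ≤ 1 := by
  refine ContinuousLinearMap.opNorm_le_bound _ zero_le_one fun x => ?_
  have hx : (1 - α • InnerProductSpace.rankOne ℝ u u) x = x - (α * inner ℝ u x) • u := by
    simp [InnerProductSpace.rankOne_apply, mul_smul]
  -- `‖x - α⟪u, x⟫ u‖² = ‖x‖² - α⟪u, x⟫² (2 - α‖u‖²)`
  have hsq : ‖x - (α * inner ℝ u x) • u‖ ^ 2 ≤ ‖x‖ ^ 2 := by
    rw [norm_sub_sq_real, inner_smul_right, norm_smul, mul_pow, Real.norm_eq_abs, sq_abs,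
      real_inner_comm u x]
    nlinarith [mul_nonneg (mul_nonneg hα (sq_nonneg (inner ℝ u x))) (sub_nonneg.2 h)]
  rw [hx, one_mul]
  exact (sq_le_sq₀ (norm_nonneg _) (norm_nonneg _)).1 hsq

namespace Matrix

variable {n : Type*} [Fintype n] [DecidableEq n]

theorem l2_opNorm_one_le_s4 {𝕜 : Type*} [RCLike 𝕜] : ‖(1 : Matrix n n 𝕜)‖ ≤ 1 := by
  rw [cstar_norm_def, map_one]
  exact ContinuousLinearMap.norm_id_le

theorem toEuclideanCLM_vecMulVec_self (w : n → ℝ) :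
    toEuclideanCLM (𝕜 := ℝ) (vecMulVec w w)
      = InnerProductSpace.rankOne ℝ (WithLp.toLp 2 w) (WithLp.toLp 2 w) := by
  ext x i
  simp [InnerProductSpace.rankOne_apply, Matrix.mulVec, vecMulVec_apply, dotProduct,
    PiLp.inner_apply, Finset.mul_sum, mul_comm, mul_assoc]

theorem l2_opNorm_smul_vecMulVec_self {α : ℝ} (hα : 0 ≤ α) (w : n → ℝ) :
    ‖α • vecMulVec w w‖ = α * ‖WithLp.toLp 2 w‖ ^ 2 := by
  rw [cstar_norm_def, map_smul, toEuclideanCLM_vecMulVec_self, norm_smul,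
    InnerProductSpace.norm_rankOne, Real.norm_of_nonneg hα, sq]

theorem l2_opNorm_one_sub_smul_vecMulVec_self_le_one {α : ℝ} (hα : 0 ≤ α) (w : n → ℝ)
    (h : α * ‖WithLp.toLp 2 w‖ ^ 2 ≤ 2) : ‖1 - α • vecMulVec w w‖ ≤ 1 := by
  rw [cstar_norm_def, map_sub, map_one, map_smul, toEuclideanCLM_vecMulVec_self]
  exact norm_one_sub_smul_rankOne_self_le_one _ hα h

end Matrix

theorem EuclideanSpace.norm_toLp_eq_sqrt_sum_sq {n : Type*} [Fintype n] (v : n → ℝ) :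
    ‖WithLp.toLp 2 v‖ = √(∑ i, v i ^ 2) := by
  simp [EuclideanSpace.norm_eq]

theorem specNorm_le_l2_opNorm {m n : ℕ} (A : Matrix (Fin m) (Fin n) ℝ) : specNorm A ≤ ‖A‖ := by
  refine Real.sSup_le ?_ (norm_nonneg A)
  rintro r ⟨v, hv, rfl⟩
  have hv1 : ‖WithLp.toLp 2 v‖ = 1 := by
    rw [EuclideanSpace.norm_toLp_eq_sqrt_sum_sq, hv, Real.sqrt_one]
  rw [← EuclideanSpace.norm_toLp_eq_sqrt_sum_sq, ← mul_one ‖A‖, ← hv1]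
  exact A.l2_opNorm_mulVec (WithLp.toLp 2 v)

theorem choose_two_mul_sq_le_sum_pow (τ : ℕ) {a : ℝ} (ha : 0 ≤ a) :
    a ^ 2 * τ.choose 2 ≤ ∑ z ∈ Finset.Icc 2 τ, (τ * a) ^ z := by
  rcases lt_or_ge τ 2 with hτ | hτ
  · rw [Nat.choose_eq_zero_of_lt hτ, Nat.cast_zero, mul_zero]
    exact Finset.sum_nonneg fun z _ => by positivity
  · calc a ^ 2 * τ.choose 2 ≤ a ^ 2 * τ ^ 2 := by
          gcongr
          exact_mod_cast Nat.choose_le_pow τ 2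
      _ = (τ * a) ^ 2 := by ring
      _ ≤ ∑ z ∈ Finset.Icc 2 τ, (τ * a) ^ z :=
          Finset.single_le_sum (f := fun z => ((τ : ℝ) * a) ^ z) (fun z _ => by positivity)
            (Finset.mem_Icc.2 ⟨le_rfl, hτ⟩)

theorem stmt4 {k : ℕ} (τ : ℕ) (α L : ℝ) (hα : 0 < α) (hαL : α * L ^ 2 < 1)
    (w : Fin τ → Fin k → ℝ)
    (hw : ∀ s, Real.sqrt (∑ i, w s i ^ 2) ≤ L) :
    specNorm (((List.finRange τ).map
        (fun s => (1 : Matrix (Fin k) (Fin k) ℝ) - α • vecMulVec (w s) (w s))).prod) ≤ 1 ∧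
    specNorm (((List.finRange τ).map
        (fun s => (1 : Matrix (Fin k) (Fin k) ℝ) - α • vecMulVec (w s) (w s))).prod
      - ((1 : Matrix (Fin k) (Fin k) ℝ) - α • ∑ s, vecMulVec (w s) (w s)))
      ≤ ∑ z ∈ Finset.Icc 2 τ, (α * τ * L ^ 2) ^ z := by
  have hB : ∀ s, ‖α • vecMulVec (w s) (w s)‖ ≤ α * L ^ 2 := fun s => by
    rw [Matrix.l2_opNorm_smul_vecMulVec_self hα.le, EuclideanSpace.norm_toLp_eq_sqrt_sum_sq]
    gcongr
    exact hw s
  have h1 : ∀ s, ‖1 - α • vecMulVec (w s) (w s)‖ ≤ 1 := fun s =>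
    Matrix.l2_opNorm_one_sub_smul_vecMulVec_self_le_one hα.le _
      (by linarith [(Matrix.l2_opNorm_smul_vecMulVec_self hα.le (w s)).symm.trans_le (hB s)])
  have hsum : α • ∑ s, vecMulVec (w s) (w s)
      = ((List.finRange τ).map fun s => α • vecMulVec (w s) (w s)).sum := by
    rw [Finset.smul_sum, Fin.sum_univ_def]
  refine ⟨(specNorm_le_l2_opNorm _).trans (List.norm_prod_le_one
    Matrix.l2_opNorm_one_le_s4 (List.forall_mem_map.2 fun s _ => h1 s)),
    (specNorm_le_l2_opNorm _).trans ?_⟩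
  calc _ ≤ (α * L ^ 2) ^ 2 * (List.finRange τ).length.choose 2 := by
        rw [hsum]
        exact List.norm_prod_one_sub_sub_one_sub_sum_le _ _ (fun s _ => h1 s) (fun s _ => hB s)
    _ ≤ ∑ z ∈ Finset.Icc 2 τ, (α * τ * L ^ 2) ^ z := by
        rw [List.length_finRange, show α * τ * L ^ 2 = τ * (α * L ^ 2) by ring]
        exact choose_two_mul_sq_le_sum_pow τ (by positivity)
end

section
/- For all δ₀ ∈ [0, 1), we have √((1 + 0.1(1−δ₀)²) / (1 − 0.1(1−δ₀)/(1+δ₀))) · δ₀ ≤ (2 + δ₀)/3. -/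
theorem stmt8 (δ : ℝ) (hδ0 : 0 ≤ δ) (hδ1 : δ < 1) :
    Real.sqrt ((1 + 0.1 * (1 - δ) ^ 2) / (1 - 0.1 * (1 - δ) / (1 + δ))) * δ ≤ (2 + δ) / 3 := by
  have h1δ : (0:ℝ) < 1 + δ := by linarith
  have hden : (0:ℝ) < 1 - 0.1 * (1 - δ) / (1 + δ) := by
    rw [sub_pos, div_lt_one h1δ]; nlinarith
  have hnum : (0:ℝ) ≤ 1 + 0.1 * (1 - δ) ^ 2 := by nlinarith
  set A : ℝ := (1 + 0.1 * (1 - δ) ^ 2) / (1 - 0.1 * (1 - δ) / (1 + δ)) with hA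
  have hAnn : 0 ≤ A := div_nonneg hnum hden.le
  have key : A * δ ^ 2 ≤ ((2 + δ) / 3) ^ 2 := by
    rw [hA, div_mul_eq_mul_div, div_le_iff₀ hden]
    rw [show (1:ℝ) - 0.1 * (1 - δ) / (1 + δ) = (1 + δ - 0.1 * (1 - δ)) / (1 + δ) by
      field_simp]
    rw [mul_div_assoc', le_div_iff₀ h1δ]
    nlinarith [sq_nonneg (1 - δ), sq_nonneg δ, sq_nonneg (δ * (1 - δ)),
      sq_nonneg (δ^2 * (1 - δ)), mul_nonneg hδ0 hδ0, sq_nonneg (1 + δ)]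
  calc Real.sqrt A * δ = Real.sqrt (A * δ ^ 2) := by
        rw [Real.sqrt_mul hAnn, Real.sqrt_sq hδ0]
    _ ≤ Real.sqrt (((2 + δ) / 3) ^ 2) := Real.sqrt_le_sqrt key
    _ = (2 + δ) / 3 := Real.sqrt_sq (by linarith)
end

section
/- In the setting of the previous construction, with additionally B₀ = (1/‖w̄‖) B_* w̄ v₀ᵀ + B̃₀ Ṽ₀ᵀ where v₀ ∈ ℝ^k is a unit vector, Ṽ₀ ∈ ℝ^{k×(k−1)} has orthonormal columns with Ṽ₀ᵀ v₀ = 0: dist(B₀, B_*) = dist(B̃₀, B̃_*), where dist(A, C) := ‖(I_d − C Cᵀ) A‖₂ for matrices A, C with orthonormal columns. -/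
open Matrix BigOperators

lemma myMul_vecMulVec {l m n : Type*} [Fintype m] (A : Matrix l m ℝ) (u : m → ℝ) (v : n → ℝ) :
    A * vecMulVec u v = vecMulVec (A.mulVec u) v := by
  ext i j
  simp only [mul_apply, vecMulVec_apply, mulVec, dotProduct, Finset.sum_mul]
  exact Finset.sum_congr rfl fun l _ => by ring

lemma myVecMulVec_mul {l m n : Type*} [Fintype m] (u : l → ℝ) (v : m → ℝ) (A : Matrix m n ℝ) :
    vecMulVec u v * A = vecMulVec u (Aᵀ.mulVec v) := by
  ext i j
  simp only [mul_apply, vecMulVec_apply, mulVec, dotProduct, transpose_apply, Finset.mul_sum]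
  exact Finset.sum_congr rfl fun l _ => by ring

lemma myTranspose_vecMulVec {l m : Type*} (u : l → ℝ) (v : m → ℝ) :
    (vecMulVec u v)ᵀ = vecMulVec v u := by
  ext i j; simp [vecMulVec_apply, mul_comm]

lemma dot_self_eq_sum_sq {n : Type*} [Fintype n] (x : n → ℝ) : x ⬝ᵥ x = ∑ i, x i ^ 2 := by
  simp [dotProduct, sq]

lemma contraction {n p : ℕ} (V : Matrix (Fin p) (Fin n) ℝ) (hV : Vᵀ * V = 1)
    (v : Fin p → ℝ) : ∑ i, (Vᵀ.mulVec v) i ^ 2 ≤ ∑ i, v i ^ 2 := by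
  have hx : Vᵀ.mulVec v = Vᵀ.mulVec v := rfl
  let x : Fin n → ℝ := Vᵀ.mulVec v
  let w : Fin p → ℝ := V.mulVec x
  have hvw : v ⬝ᵥ w = x ⬝ᵥ x := by
    show v ⬝ᵥ V.mulVec x = x ⬝ᵥ x
    rw [dotProduct_mulVec, ← Matrix.mulVec_transpose]
  have hww : w ⬝ᵥ w = x ⬝ᵥ x := by
    show V.mulVec x ⬝ᵥ V.mulVec x = x ⬝ᵥ x
    rw [dotProduct_mulVec, ← Matrix.mulVec_transpose, Matrix.mulVec_mulVec, hV,
      Matrix.one_mulVec]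
  have key : ∑ i, (v i - w i) ^ 2 = (v ⬝ᵥ v) - 2 * (v ⬝ᵥ w) + w ⬝ᵥ w := by
    simp only [dotProduct, Finset.mul_sum, ← Finset.sum_sub_distrib, ← Finset.sum_add_distrib]
    exact Finset.sum_congr rfl fun i _ => by ring
  have h0 : 0 ≤ ∑ i, (v i - w i) ^ 2 := Finset.sum_nonneg fun _ _ => sq_nonneg _
  have h1 := dot_self_eq_sum_sq v
  have h2 := dot_self_eq_sum_sq x
  have h3 := dot_self_eq_sum_sq w
  linarith [key, hvw, hww]

lemma unit_exists {n : ℕ} (hn : 0 < n) : ∃ x : Fin n → ℝ, ∑ i, x i ^ 2 = 1 := by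
  refine ⟨fun j => if j = ⟨0, hn⟩ then 1 else 0, ?_⟩
  simp [apply_ite (· ^ 2)]

lemma mulVec_sq_bound {m n : ℕ} (M : Matrix (Fin m) (Fin n) ℝ) (x : Fin n → ℝ) :
    ∑ i, (M.mulVec x) i ^ 2 ≤ (∑ i, ∑ j, M i j ^ 2) * ∑ j, x j ^ 2 := by
  rw [Finset.sum_mul]
  apply Finset.sum_le_sum
  intro i _
  simpa [mulVec, dotProduct] using
    Finset.sum_mul_sq_le_sq_mul_sq Finset.univ (fun j => M i j) x

lemma specNorm_mul_transpose {m n p : ℕ} (hp : 0 < p) (M : Matrix (Fin m) (Fin n) ℝ)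
    (V : Matrix (Fin p) (Fin n) ℝ) (hV : Vᵀ * V = 1) :
    specNorm (M * Vᵀ) = specNorm M := by
  have hVVx : ∀ x : Fin n → ℝ, Vᵀ.mulVec (V.mulVec x) = x := by
    intro x; rw [Matrix.mulVec_mulVec, hV, Matrix.one_mulVec]
  have hnormVx : ∀ x : Fin n → ℝ, ∑ i, (V.mulVec x) i ^ 2 = ∑ i, x i ^ 2 := by
    intro x
    rw [← dot_self_eq_sum_sq, ← dot_self_eq_sum_sq, dotProduct_mulVec,
      ← Matrix.mulVec_transpose, hVVx]
  set S1 := {r : ℝ | ∃ v : Fin p → ℝ, ∑ i, v i ^ 2 = 1 ∧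
    r = Real.sqrt (∑ i, ((M * Vᵀ).mulVec v) i ^ 2)} with hS1
  set S2 := {r : ℝ | ∃ v : Fin n → ℝ, ∑ i, v i ^ 2 = 1 ∧
    r = Real.sqrt (∑ i, (M.mulVec v) i ^ 2)} with hS2
  have hmem1 : ∀ r ∈ S1, ∃ v : Fin p → ℝ, ∑ i, v i ^ 2 = 1 ∧
      r = Real.sqrt (∑ i, (M.mulVec (Vᵀ.mulVec v)) i ^ 2) := by
    intro r hr
    obtain ⟨v, hv, hrv⟩ := hr
    exact ⟨v, hv, by rw [hrv, ← Matrix.mulVec_mulVec]⟩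
  set C := Real.sqrt (∑ i, ∑ j, M i j ^ 2) with hC
  have hC0 : 0 ≤ ∑ i, ∑ j, M i j ^ 2 :=
    Finset.sum_nonneg fun _ _ => Finset.sum_nonneg fun _ _ => sq_nonneg _
  have hbd2 : ∀ r ∈ S2, r ≤ C := by
    rintro r ⟨x, hx, rfl⟩
    apply Real.sqrt_le_sqrt
    calc ∑ i, (M.mulVec x) i ^ 2 ≤ (∑ i, ∑ j, M i j ^ 2) * ∑ j, x j ^ 2 :=
          mulVec_sq_bound M x
      _ = ∑ i, ∑ j, M i j ^ 2 := by rw [hx, mul_one]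
  have hbdd2 : BddAbove S2 := ⟨C, hbd2⟩
  have hbd1 : ∀ r ∈ S1, r ≤ C := by
    intro r hr
    obtain ⟨v, hv, rfl⟩ := hmem1 r hr
    apply Real.sqrt_le_sqrt
    calc ∑ i, (M.mulVec (Vᵀ.mulVec v)) i ^ 2
        ≤ (∑ i, ∑ j, M i j ^ 2) * ∑ j, (Vᵀ.mulVec v) j ^ 2 := mulVec_sq_bound M _
      _ ≤ (∑ i, ∑ j, M i j ^ 2) * ∑ j, v j ^ 2 := by
          exact mul_le_mul_of_nonneg_left (contraction V hV v) hC0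
      _ = ∑ i, ∑ j, M i j ^ 2 := by rw [hv, mul_one]
  have hbdd1 : BddAbove S1 := ⟨C, hbd1⟩
  have hS1ne : S1.Nonempty := by
    obtain ⟨v, hv⟩ := unit_exists hp
    exact ⟨_, v, hv, rfl⟩
  rcases Nat.eq_zero_or_pos n with hn | hn
  · -- n = 0 : S2 empty, all elements of S1 are 0
    have hS2e : S2 = ∅ := by
      ext r
      simp only [hS2, Set.mem_setOf_eq, Set.mem_empty_iff_false, iff_false, not_exists]
      intro v
      rintro ⟨hv, -⟩
      subst hn
      simpa using hv
    have h1zero : ∀ r ∈ S1, r = 0 := by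
      intro r hr
      obtain ⟨v, hv, rfl⟩ := hmem1 r hr
      have : M.mulVec (Vᵀ.mulVec v) = 0 := by
        subst hn
        ext i
        simp [mulVec, dotProduct]
      rw [this]
      simp
    have : sSup S1 = 0 := by
      apply le_antisymm
      · exact Real.sSup_le (fun r hr => le_of_eq (h1zero r hr)) le_rfl
      · obtain ⟨r, hr⟩ := hS1ne
        rw [← h1zero r hr]
        exact le_csSup hbdd1 hr
    rw [specNorm, specNorm, ← hS1, ← hS2, this, hS2e, Real.sSup_empty]
  · have hS2ne : S2.Nonempty := by
      obtain ⟨x, hx⟩ := unit_exists hn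
      exact ⟨_, x, hx, rfl⟩
    apply le_antisymm
    · -- sSup S1 ≤ sSup S2
      apply csSup_le hS1ne
      intro r hr
      obtain ⟨v, hv, rfl⟩ := hmem1 r hr
      set x := Vᵀ.mulVec v with hxdef
      set t := ∑ j, x j ^ 2 with ht
      have ht0 : 0 ≤ t := Finset.sum_nonneg fun _ _ => sq_nonneg _
      have ht1 : t ≤ 1 := by rw [ht, ← hv]; exact contraction V hV v
      have hge0 : ∃ s ∈ S2, (0:ℝ) ≤ s := by
        obtain ⟨s, x', hx', rfl⟩ := hS2ne
        exact ⟨_, ⟨x', hx', rfl⟩, Real.sqrt_nonneg _⟩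
      rcases eq_or_lt_of_le ht0 with hteq | htpos
      · -- t = 0 so x = 0
        have hx0 : x = 0 := by
          funext j
          have := (Finset.sum_eq_zero_iff_of_nonneg
            (fun i _ => sq_nonneg (x i))).mp hteq.symm j (Finset.mem_univ j)
          exact pow_eq_zero_iff (n := 2) (by norm_num) |>.mp this
        rw [hx0]
        simp only [Matrix.mulVec_zero, Pi.zero_apply]
        obtain ⟨s, hs, hs0⟩ := hge0
        calc Real.sqrt (∑ i, (0:ℝ) ^ 2) = 0 := by simp
          _ ≤ s := hs0
          _ ≤ sSup S2 := le_csSup hbdd2 hs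
      · set y : Fin n → ℝ := (Real.sqrt t)⁻¹ • x with hy
        have hst : Real.sqrt t > 0 := Real.sqrt_pos.mpr htpos
        have hyunit : ∑ j, y j ^ 2 = 1 := by
          rw [hy]
          simp only [Pi.smul_apply, smul_eq_mul, mul_pow]
          rw [← Finset.mul_sum, ← ht, inv_pow, Real.sq_sqrt ht0]
          exact inv_mul_cancel₀ (ne_of_gt htpos)
        have hMx : ∑ i, (M.mulVec x) i ^ 2 = t * ∑ i, (M.mulVec y) i ^ 2 := by
          rw [hy, Matrix.mulVec_smul]
          simp only [Pi.smul_apply, smul_eq_mul, mul_pow]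
          rw [← Finset.mul_sum, ← mul_assoc, inv_pow, Real.sq_sqrt ht0,
            mul_inv_cancel₀ (ne_of_gt htpos), one_mul]
        rw [hMx, Real.sqrt_mul ht0]
        have h2 : Real.sqrt (∑ i, (M.mulVec y) i ^ 2) ≤ sSup S2 :=
          le_csSup hbdd2 ⟨y, hyunit, rfl⟩
        calc Real.sqrt t * Real.sqrt (∑ i, (M.mulVec y) i ^ 2)
            ≤ 1 * Real.sqrt (∑ i, (M.mulVec y) i ^ 2) := by
              apply mul_le_mul_of_nonneg_right _ (Real.sqrt_nonneg _)
              rw [show (1:ℝ) = Real.sqrt 1 by simp]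
              exact Real.sqrt_le_sqrt ht1
          _ = Real.sqrt (∑ i, (M.mulVec y) i ^ 2) := one_mul _
          _ ≤ sSup S2 := h2
    · -- sSup S2 ≤ sSup S1
      apply csSup_le hS2ne
      rintro r ⟨x, hx, rfl⟩
      have : Real.sqrt (∑ i, (M.mulVec x) i ^ 2) ∈ S1 := by
        refine ⟨V.mulVec x, by rw [hnormVx, hx], ?_⟩
        rw [← Matrix.mulVec_mulVec, hVVx]
      exact le_csSup hbdd1 this


theorem stmt12 {d k : ℕ} (hk : 0 < k)
    (Bstar : Matrix (Fin d) (Fin k) ℝ) (hBstar : Bstarᵀ * Bstar = 1)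
    (wbar : Fin k → ℝ) (hw : wbar ≠ 0)
    (Bt0 Bts : Matrix (Fin d) (Fin (k - 1)) ℝ) (Vts : Matrix (Fin k) (Fin (k - 1)) ℝ)
    (hBts : Btsᵀ * Bts = 1) (hBtsw : Btsᵀ.mulVec (Bstar.mulVec wbar) = 0)
    (hVts : Vtsᵀ * Vts = 1) (hVtsw : Vtsᵀ.mulVec wbar = 0)
    (hBt0 : Bt0ᵀ * Bt0 = 1) (hBt0w : Bt0ᵀ.mulVec (Bstar.mulVec wbar) = 0)
    (hdecomp : Bstar = (∑ i, wbar i ^ 2)⁻¹ • vecMulVec (Bstar.mulVec wbar) wbar + Bts * Vtsᵀ)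
    (v₀ : Fin k → ℝ) (hv₀ : ∑ i, v₀ i ^ 2 = 1)
    (Vt0 : Matrix (Fin k) (Fin (k - 1)) ℝ) (hVt0 : Vt0ᵀ * Vt0 = 1) (hVt0v : Vt0ᵀ.mulVec v₀ = 0)
    (B₀ : Matrix (Fin d) (Fin k) ℝ)
    (hB₀ : B₀ = (Real.sqrt (∑ i, wbar i ^ 2))⁻¹ • vecMulVec (Bstar.mulVec wbar) v₀ + Bt0 * Vt0ᵀ) :
    specNorm ((1 - Bstar * Bstarᵀ) * B₀) = specNorm ((1 - Bts * Btsᵀ) * Bt0) := by 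
  set u : Fin d → ℝ := Bstar.mulVec wbar with hu
  set S : ℝ := ∑ i, wbar i ^ 2 with hS
  have hvv0 : vecMulVec wbar (0 : Fin (k-1) → ℝ) = 0 := by
    ext i j; simp [vecMulVec_apply]
  have hvv0' : vecMulVec u (0 : Fin (k-1) → ℝ) = 0 := by
    ext i j; simp [vecMulVec_apply]
  have hBw : Bstarᵀ.mulVec u = wbar := by
    rw [hu, Matrix.mulVec_mulVec, hBstar, Matrix.one_mulVec]
  have hdecompT : Bstarᵀ = S⁻¹ • vecMulVec wbar u + Vts * Btsᵀ := by
    conv_lhs => rw [hdecomp]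
    rw [transpose_add, transpose_smul, myTranspose_vecMulVec, transpose_mul,
      transpose_transpose]
  have hBstarBt0 : Bstarᵀ * Bt0 = Vts * (Btsᵀ * Bt0) := by
    rw [hdecompT, Matrix.add_mul, Matrix.smul_mul, myVecMulVec_mul, hBt0w, hvv0, smul_zero,
      zero_add, Matrix.mul_assoc]
  have hBstarVts : Bstar * Vts = Bts := by
    conv_lhs => rw [hdecomp]
    rw [Matrix.add_mul, Matrix.smul_mul, myVecMulVec_mul, hVtsw, hvv0', smul_zero, zero_add,
      Matrix.mul_assoc, hVts, Matrix.mul_one]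
  have hBstarTB₀ : Bstarᵀ * B₀ =
      (Real.sqrt S)⁻¹ • vecMulVec wbar v₀ + Vts * (Btsᵀ * Bt0) * Vt0ᵀ := by
    rw [hB₀, Matrix.mul_add, Matrix.mul_smul, myMul_vecMulVec, hBw, ← Matrix.mul_assoc, hBstarBt0]
  have expand : Bstar * (Bstarᵀ * B₀) =
      (Real.sqrt S)⁻¹ • vecMulVec u v₀ + Bts * (Btsᵀ * Bt0) * Vt0ᵀ := by
    rw [hBstarTB₀, Matrix.mul_add, Matrix.mul_smul, myMul_vecMulVec, ← hu, ← Matrix.mul_assoc,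
      ← Matrix.mul_assoc, hBstarVts]
  have key : (1 - Bstar * Bstarᵀ) * B₀ = ((1 - Bts * Btsᵀ) * Bt0) * Vt0ᵀ := by
    calc (1 - Bstar * Bstarᵀ) * B₀ = B₀ - Bstar * (Bstarᵀ * B₀) := by
          rw [Matrix.sub_mul, Matrix.one_mul, Matrix.mul_assoc]
      _ = ((Real.sqrt S)⁻¹ • vecMulVec u v₀ + Bt0 * Vt0ᵀ) -
          ((Real.sqrt S)⁻¹ • vecMulVec u v₀ + Bts * (Btsᵀ * Bt0) * Vt0ᵀ) := by
          rw [expand, hB₀]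
      _ = ((1 - Bts * Btsᵀ) * Bt0) * Vt0ᵀ := by
          simp only [Matrix.sub_mul, Matrix.one_mul, Matrix.mul_assoc]
          abel
  rw [key]
  exact specNorm_mul_transpose hk ((1 - Bts * Btsᵀ) * Bt0) Vt0 hVt0
end
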